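/- arXiv:0810.5481 — 5 statements merged into one kernel-verified Lean document; each statement's English description precedes it below -/
import Mathlib

section
/- Let 𝒰 = {U_α : α ∈ A} be a cover of a topological space X by subspaces each of which is a Dold space (in the subspace topology). If 𝒰 admits a numerable refinement 𝒱 = {V_j : j ∈ J} (a numerable cover of X with each V_j contained in some U_α), then X is a Dold space. -/
open unitInterval

universe u v w

/-- A partition of unity: continuous `[0,1]`-valued maps whose pointwise sum is `1`. -/
def IsPartitionOfUnity {ι : Type*} {X : Type*} [TopologicalSpace X]
    (f : ι → X → ℝ) : Prop :=
  (∀ i, Continuous (f i)) ∧ (∀ i x, f i x ∈ Set.Icc (0 : ℝ) 1) ∧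
    ∀ x, HasSum (fun i => f i x) 1

/-- A cover is numerable if it admits a subordinate partition of unity with
locally finite supports. -/
def IsNumerableCover {ι : Type*} {X : Type*} [TopologicalSpace X]
    (U : ι → Set X) : Prop :=
  ∃ f : ι → X → ℝ, IsPartitionOfUnity f ∧
    LocallyFinite (fun i => closure (Function.support (f i))) ∧
    ∀ i, closure (Function.support (f i)) ⊆ U i

/-- `U` is ambiently contractible to `x₀`: the inclusion `U → X` is homotopic to the
constant map at `x₀`. -/
def AmbientlyContractibleTo {X : Type*} [TopologicalSpace X] (U : Set X) (x₀ : X) : Prop :=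
  ContinuousMap.Homotopic
    (⟨Subtype.val, continuous_subtype_val⟩ : C(U, X))
    (ContinuousMap.const ↥U x₀)

/-- `U ⊆ X` is ambiently contractible: the inclusion `U → X` is nullhomotopic. -/
def AmbientlyContractible {X : Type*} [TopologicalSpace X] (U : Set X) : Prop :=
  ∃ x₀ : X, AmbientlyContractibleTo U x₀

/-- A Dold space (numerably contractible space): a space admitting a numerable cover
by ambiently contractible subsets. -/
def IsDoldSpace (X : Type u) [TopologicalSpace X] : Prop :=
  ∃ (ι : Type u) (U : ι → Set X),
    (∀ x, ∃ i, x ∈ U i) ∧ IsNumerableCover U ∧ ∀ i, AmbientlyContractible (U i)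

/-!
Choose `i j` with `V j ⊆ U (i j)`, a partition of unity `f` subordinate to `V`, and for each `j`
a partition of unity `g j` of the subspace `U (i j)` subordinate to a cover `C j` by subsets
contractible in `U (i j)`. The products `f j * g j k`, extended by zero off `U (i j)`, form a
partition of unity of `X` subordinate to the sets `C j k`, which are contractible in `X`; continuity
across the frontier of `U (i j)` holds because `g j k` is bounded and `f j` vanishes there.

This cover is indexed by a type in a possibly larger universe. Only indices with nonempty support
matter, and local finiteness leaves finitely many of them through each point, so they are
reindexed by a type in the universe of `X`.
-/

open Function Set Filter

theorem AmbientlyContractible.image_val {X : Type*} [TopologicalSpace X] {U : Set X} {C : Set U}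
    (h : AmbientlyContractible C) : AmbientlyContractible (Subtype.val '' C : Set X) := by
  obtain ⟨x₀, hx₀⟩ := h
  have hmem (y : (Subtype.val '' C : Set X)) : ∃ hy : y.1 ∈ U, (⟨y.1, hy⟩ : U) ∈ C := by
    simpa only [Subtype.coe_image, mem_ofPred_eq] using y.2
  let m : C((Subtype.val '' C : Set X), C) :=
    ⟨fun y => ⟨⟨y.1, (hmem y).1⟩, (hmem y).2⟩, by fun_prop⟩
  exact ⟨x₀, (ContinuousMap.Homotopic.refl ⟨Subtype.val, continuous_subtype_val⟩).comp
    (hx₀.comp (.refl m))⟩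

theorem IsNumerableCover.mono {X ι : Type*} [TopologicalSpace X] {V W : ι → Set X}
    (hV : IsNumerableCover V) (hVW : ∀ i, V i ⊆ W i) : IsNumerableCover W := by
  obtain ⟨f, hf, hlf, hfV⟩ := hV
  exact ⟨f, hf, hlf, fun i => (hfV i).trans (hVW i)⟩

theorem IsNumerableCover.exists_mem {X ι : Type*} [TopologicalSpace X] {W : ι → Set X}
    (hW : IsNumerableCover W) (x : X) : ∃ i, x ∈ W i := by
  obtain ⟨f, ⟨-, -, hsum⟩, -, hfW⟩ := hW
  obtain ⟨i, hi⟩ : ∃ i, f i x ≠ 0 := by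
    by_contra! h
    exact one_ne_zero ((hsum x).unique (by simp [h]))
  exact ⟨i, hfW i (subset_closure hi)⟩

theorem IsPartitionOfUnity.comp {X ι ι' : Type*} [TopologicalSpace X] {f : ι → X → ℝ}
    (hf : IsPartitionOfUnity f) {e : ι' → ι} (he : Injective e)
    (hzero : ∀ i ∉ range e, f i = 0) : IsPartitionOfUnity (f ∘ e) := by
  obtain ⟨hcont, hIcc, hsum⟩ := hf
  exact ⟨fun _ => hcont _, fun _ => hIcc _, fun x =>
    (he.hasSum_iff fun i hi => congrFun (hzero i hi) x).2 (hsum x)⟩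

theorem LocallyFinite.small_nonempty {X : Type u} [TopologicalSpace X] {ι : Type*}
    {s : ι → Set X} (hs : LocallyFinite s) : Small.{u} {i // (s i).Nonempty} := by
  choose x hx using fun i : {i // (s i).Nonempty} => i.2
  have (y : X) : Small.{u} {i // y ∈ s i} :=
    @Countable.toSmall _ (hs.point_finite y).countable.to_subtype
  exact small_of_injective (β := Σ y : X, {i // y ∈ s i})
    (f := fun i => ⟨x i, i.1, hx i⟩) fun i j hij => Subtype.ext (congrArg (·.2.1) hij)

theorem IsDoldSpace.of_isNumerableCover {X : Type u} [TopologicalSpace X] {ι : Type*}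
    {W : ι → Set X} (hW : IsNumerableCover W) (hcontr : ∀ i, AmbientlyContractible (W i)) :
    IsDoldSpace X := by
  obtain ⟨f, hf, hlf, hfW⟩ := hW
  have := hlf.small_nonempty
  let e : Shrink.{u} {i // (closure (support (f i))).Nonempty} → ι :=
    Subtype.val ∘ (equivShrink _).symm
  have he : Injective e := Subtype.val_injective.comp (equivShrink _).symm.injective
  have hzero (i) (hi : i ∉ range e) : f i = 0 := by
    by_contra h
    exact hi ⟨equivShrink _ ⟨i, (support_nonempty_iff.2 h).mono subset_closure⟩, by simp [e]⟩
  have hWe : IsNumerableCover (W ∘ e) :=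
    ⟨f ∘ e, hf.comp he hzero, hlf.comp_injective he, fun _ => hfW _⟩
  exact ⟨_, W ∘ e, hWe.exists_mem, hWe, fun _ => hcontr _⟩

theorem LocallyFinite.image_val_inter {X ι : Type*} [TopologicalSpace X] {U : Set X}
    {t : ι → Set U} (ht : LocallyFinite t) {A : Set X} (hA : IsClosed A) (hAU : A ⊆ U) :
    LocallyFinite fun i => Subtype.val '' t i ∩ A := by
  intro x
  by_cases hx : x ∈ A
  · obtain ⟨M, hM, hfin⟩ := ht ⟨x, hAU hx⟩
    obtain ⟨O, hO, hOM⟩ := (mem_nhds_subtype _ _ _).1 hM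
    refine ⟨O, hO, hfin.subset ?_⟩
    rintro i ⟨-, ⟨⟨z, hz, rfl⟩, -⟩, hzO⟩
    exact ⟨z, hz, hOM hzO⟩
  · refine ⟨Aᶜ, hA.isOpen_compl.mem_nhds hx, ?_⟩
    simp [inter_assoc]

theorem LocallyFinite.sigma {X ι : Type*} [TopologicalSpace X] {κ : ι → Type*}
    {s : ι → Set X} {t : (i : ι) → κ i → Set X} (hs : LocallyFinite s)
    (ht : ∀ i, LocallyFinite (t i)) (hts : ∀ i k, t i k ⊆ s i) :
    LocallyFinite fun p : Σ i, κ i => t p.1 p.2 := by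
  intro x
  obtain ⟨N, hN, hfin⟩ := hs x
  choose O hO hOfin using fun i => ht i x
  refine ⟨N ∩ ⋂ i ∈ hfin.toFinset, O i,
    inter_mem hN ((biInter_finset_mem _).2 fun i _ => hO i), ?_⟩
  refine ((finite_mem_finset hfin.toFinset).biUnion fun i _ =>
    (hOfin i).image (Sigma.mk i)).subset ?_
  rintro ⟨i, k⟩ ⟨y, hyt, hyN, hyO⟩
  have hi : i ∈ hfin.toFinset := (Finite.mem_toFinset _).2 ⟨y, hts i k hyt, hyN⟩
  exact mem_biUnion hi ⟨k, ⟨y, hyt, mem_iInter₂.1 hyO i hi⟩, rfl⟩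

theorem HasSum.sigma_of_nonneg {ι : Type*} {κ : ι → Type*} {f : (Σ i, κ i) → ℝ}
    (hf : ∀ p, 0 ≤ f p) {g : ι → ℝ} (hfg : ∀ i, HasSum (fun k => f ⟨i, k⟩) (g i)) {a : ℝ}
    (hg : HasSum g a) : HasSum f a :=
  hg.sigma_of_hasSum hfg <| (summable_sigma_of_nonneg hf).2
    ⟨fun i => (hfg i).summable, by simpa only [(hfg _).tsum_eq] using hg.summable⟩

section ExtendVal

variable {X : Type*} {U : Set X}

theorem extend_val_mem {Y : Type*} {g : U → Y} {S : Set Y} (hg : ∀ y, g y ∈ S) {e : X → Y}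
    (he : ∀ x, e x ∈ S) (x : X) : Subtype.val.extend g e x ∈ S := by
  unfold Function.extend
  split_ifs
  exacts [hg _, he x]

theorem hasSum_mul_extend_val {κ : Type*} {f : X → ℝ} {g : κ → U → ℝ} (hfU : support f ⊆ U)
    (hg : ∀ y, HasSum (fun k => g k y) 1) (x : X) :
    HasSum (fun k => (f * Subtype.val.extend (g k) 0) x) (f x) := by
  by_cases hx : x ∈ U
  · lift x to U using hx
    simp only [Pi.mul_apply, Subtype.val_injective.extend_apply]
    simpa using (hg x).mul_left (f x)
  · simp [notMem_support.1 fun h => hx (hfU h), hasSum_zero]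

variable [TopologicalSpace X]

theorem tsupport_mul_extend_val_subset {M : Type*} [MulZeroClass M] {f : X → M} {g : U → M}
    (hfU : tsupport f ⊆ U) :
    tsupport (f * Subtype.val.extend g 0) ⊆ Subtype.val '' tsupport g := by
  intro x hx
  have hxg : x ∈ closure (Subtype.val '' support g) := by
    refine closure_mono ?_ hx
    rw [← support_extend_zero Subtype.val_injective]
    exact support_mul_subset_right _ _
  exact ⟨⟨x, hfU (tsupport_mul_subset_left hx)⟩, closure_subtype.2 hxg, rfl⟩

theorem continuousOn_extend_val {Y : Type*} [TopologicalSpace Y] {g : U → Y}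
    (hg : Continuous g) (e : X → Y) : ContinuousOn (Subtype.val.extend g e) U := by
  rw [continuousOn_iff_continuous_domRestrict]
  convert hg using 1
  funext y
  exact Subtype.val_injective.extend_apply g e y

theorem continuous_mul_extend_val {f : X → ℝ} {g : U → ℝ} (hf : Continuous f)
    (hg : Continuous g) (hg_le : ∀ y, |g y| ≤ 1) (hfU : support f ⊆ U) :
    Continuous (f * Subtype.val.extend g 0) := by
  refine continuous_iff_continuousAt.2 fun x => ?_
  by_cases hx : f x = 0
  · have hle (y : X) : ‖(f * Subtype.val.extend g 0) y‖ ≤ ‖f y‖ := by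
      have hext : |Subtype.val.extend g 0 y| ≤ 1 :=
        extend_val_mem (S := {r : ℝ | |r| ≤ 1}) (e := 0) hg_le (by simp) y
      simpa only [Pi.mul_apply, norm_mul, Real.norm_eq_abs] using
        mul_le_of_le_one_right (abs_nonneg (f y)) hext
    have hx' : (f * Subtype.val.extend g 0) x = 0 := by simp [hx]
    rw [ContinuousAt, hx']
    exact squeeze_zero_norm hle (by simpa [hx] using (hf.tendsto x).norm)
  · exact ((hf.continuousOn.mul (continuousOn_extend_val hg 0)).mono hfU).continuousAt
      (hf.isOpen_support.mem_nhds hx)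

end ExtendVal

theorem IsNumerableCover.sigma {X ι : Type*} [TopologicalSpace X] {κ : ι → Type*}
    {U : ι → Set X} (hU : IsNumerableCover U) {C : (i : ι) → κ i → Set (U i)}
    (hC : ∀ i, IsNumerableCover (C i)) :
    IsNumerableCover fun p : Σ i, κ i => Subtype.val '' C p.1 p.2 := by
  obtain ⟨f, ⟨hf_cont, hf_Icc, hf_sum⟩, hf_lf, hfU⟩ := hU
  choose g hg hg_lf hgC using hC
  have hsupp (i : ι) : support (f i) ⊆ U i := subset_closure.trans (hfU i)
  have hg_Icc (i : ι) (k : κ i) (x : X) : Subtype.val.extend (g i k) 0 x ∈ Icc (0 : ℝ) 1 :=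
    extend_val_mem ((hg i).2.1 k) (fun _ => ⟨le_rfl, zero_le_one⟩) x
  have hfg_Icc (p : Σ i, κ i) (x : X) : f p.1 x * Subtype.val.extend (g p.1 p.2) 0 x ∈ I :=
    unitInterval.mul_mem (hf_Icc p.1 x) (hg_Icc p.1 p.2 x)
  refine ⟨fun p => f p.1 * Subtype.val.extend (g p.1 p.2) 0,
    ⟨fun ⟨i, k⟩ => ?_, hfg_Icc, fun x => ?_⟩, ?_, fun ⟨i, k⟩ => ?_⟩
  · refine continuous_mul_extend_val (hf_cont i) ((hg i).1 k) (fun y => ?_) (hsupp i)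
    obtain ⟨h0, h1⟩ := (hg i).2.1 k y
    exact (abs_of_nonneg h0).trans_le h1
  · exact HasSum.sigma_of_nonneg (fun p => (hfg_Icc p x).1)
      (fun i => hasSum_mul_extend_val (hsupp i) (hg i).2.2 x) (hf_sum x)
  · refine hf_lf.sigma (fun i => ((hg_lf i).image_val_inter isClosed_closure (hfU i)).subset
      fun k => subset_inter (tsupport_mul_extend_val_subset (hfU i)) tsupport_mul_subset_left)
      fun i k => tsupport_mul_subset_left
  · exact (tsupport_mul_extend_val_subset (hfU i)).trans (image_mono (hgC i k))

theorem stmt3_general {X : Type u} [TopologicalSpace X] {ι : Type*} {κ : Type*}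
    (U : ι → Set X) (V : κ → Set X)
    (hUDold : ∀ i, IsDoldSpace (U i))
    (hVnum : IsNumerableCover V)
    (href : ∀ j, ∃ i, V j ⊆ U i) :
    IsDoldSpace X := by
  choose i hVU using href
  choose J C _ hC_num hC_contr using fun j => hUDold (i j)
  exact IsDoldSpace.of_isNumerableCover ((hVnum.mono hVU).sigma hC_num)
    fun p => (hC_contr p.1 p.2).image_val

/-- a space covered by Dold subspaces with a numerable refinement is Dold. -/
theorem stmt3 {X : Type u} [TopologicalSpace X] {ι : Type*} {κ : Type*}
    (U : ι → Set X) (V : κ → Set X)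
    (hUcov : ∀ x, ∃ i, x ∈ U i)
    (hUDold : ∀ i, IsDoldSpace (U i))
    (hVcov : ∀ x, ∃ j, x ∈ V j)
    (hVnum : IsNumerableCover V)
    (href : ∀ j, ∃ i, V j ⊆ U i) :
    IsDoldSpace X :=
  stmt3_general U V hUDold hVnum href
end

section
/- If a topological space Y is dominated by a Dold space X (i.e. there are continuous maps f : X → Y and g : Y → X with f ∘ g homotopic to the identity of Y), then Y is itself a Dold space. -/
open unitInterval

universe u v w

/-!
Pull back a numerable contractible cover `{U i}` of `X` along `g`. The partition of unity
composes with `g`, and each `g ⁻¹' U i` is ambiently contractible because its inclusion is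
homotopic, via `f ∘ g ≃ id`, to `f` composed with the nullhomotopic inclusion of `U i`. To get a
cover indexed in the universe of `Y`, reindex by the set of distinct preimages, summing the
partition functions over each fibre of `i ↦ g ⁻¹' U i`.
-/

open Set Function

theorem support_tsum_subset {ι X M : Type*} [AddCommMonoid M] [TopologicalSpace M]
    (p : ι → X → M) : support (fun x => ∑' i, p i x) ⊆ ⋃ i, support (p i) := by
  intro x hx
  by_contra hnot
  simp only [mem_iUnion, mem_support, not_exists, not_not] at hnot
  exact hx (by simp [hnot])

section LocallyFinite

variable {ι κ X : Type*} [TopologicalSpace X]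

theorem LocallyFinite.biUnion_fiber {C : ι → Set X} (hC : LocallyFinite C) (φ : ι → κ) :
    LocallyFinite fun k => ⋃ i ∈ φ ⁻¹' {k}, C i := by
  intro x
  obtain ⟨N, hN, hfin⟩ := hC x
  refine ⟨N, hN, (hfin.image φ).subset ?_⟩
  rintro k ⟨z, hzC, hzN⟩
  obtain ⟨i, hi, hzi⟩ := mem_iUnion₂.1 hzC
  exact ⟨i, ⟨z, hzi, hzN⟩, hi⟩

theorem continuous_tsum_of_locallyFinite {M : Type*} [AddCommMonoid M] [TopologicalSpace M]
    [ContinuousAdd M] {p : ι → X → M} (hp : ∀ i, Continuous (p i))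
    (hlf : LocallyFinite fun i => support (p i)) : Continuous fun x => ∑' i, p i x := by
  have hfinsum : (fun x => ∑' i, p i x) = fun x => ∑ᶠ i, p i x :=
    funext fun x => tsum_eq_finsum (hlf.point_finite x)
  rw [hfinsum]
  exact continuous_finsum hp hlf

end LocallyFinite

section NumerableCover

variable {ι κ X Y : Type*} [TopologicalSpace X] [TopologicalSpace Y]

theorem IsNumerableCover.preimage {U : ι → Set X} (hU : IsNumerableCover U) (g : C(Y, X)) :
    IsNumerableCover fun i => g ⁻¹' U i := by
  obtain ⟨p, ⟨hpc, hp01, hpsum⟩, hplf, hpU⟩ := hU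
  have hsupp : ∀ i, closure (support (p i ∘ g)) ⊆ g ⁻¹' closure (support (p i)) := fun i => by
    rw [support_comp_eq_preimage]
    exact g.continuous.closure_preimage_subset _
  exact ⟨fun i => p i ∘ g,
    ⟨fun i => (hpc i).comp g.continuous, fun i y => hp01 i (g y), fun y => hpsum (g y)⟩,
    (hplf.preimage_continuous g.continuous).subset hsupp,
    fun i => (hsupp i).trans (preimage_mono (hpU i))⟩

theorem IsNumerableCover.of_refinement {U : ι → Set X} {V : κ → Set X}
    (hU : IsNumerableCover U) (φ : ι → κ) (hUV : ∀ i, U i ⊆ V (φ i)) :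
    IsNumerableCover V := by
  obtain ⟨p, ⟨hpc, hp01, hpsum⟩, hplf, hpU⟩ := hU
  set r : κ → X → ℝ := fun k x => ∑' i : φ ⁻¹' {k}, p i x
  have hfiber_lf : ∀ k, LocallyFinite fun i : φ ⁻¹' {k} => closure (support (p i)) :=
    fun k => hplf.comp_injective Subtype.val_injective
  have hr_supp : ∀ k, closure (support (r k)) ⊆ ⋃ i ∈ φ ⁻¹' {k}, closure (support (p i)) := by
    intro k
    calc closure (support (r k))
        ⊆ closure (⋃ i : φ ⁻¹' {k}, support (p i)) :=
          closure_mono (support_tsum_subset fun i : φ ⁻¹' {k} => p i)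
      _ = ⋃ i : φ ⁻¹' {k}, closure (support (p i)) :=
          ((hfiber_lf k).subset fun _ => subset_closure).closure_iUnion
      _ = ⋃ i ∈ φ ⁻¹' {k}, closure (support (p i)) := iUnion_subtype _ _
  have hr_sum : ∀ x, HasSum (fun k => r k x) 1 := fun x => (hpsum x).tsum_fiberwise φ
  have hr_nonneg : ∀ k x, 0 ≤ r k x := fun k x => tsum_nonneg fun i => (hp01 i x).1
  refine ⟨r, ⟨fun k => ?_, fun k x => ⟨hr_nonneg k x, ?_⟩, hr_sum⟩,
    (hplf.biUnion_fiber φ).subset hr_supp, fun k => ?_⟩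
  · exact continuous_tsum_of_locallyFinite (fun i => hpc i)
      ((hfiber_lf k).subset fun _ => subset_closure)
  · exact le_hasSum (hr_sum x) k fun k' _ => hr_nonneg k' x
  · refine (hr_supp k).trans (iUnion₂_subset fun i hi => ?_)
    rw [mem_preimage, mem_singleton_iff] at hi
    exact (hpU i).trans (hi ▸ hUV i)

end NumerableCover

theorem ContinuousMap.Nullhomotopic.of_homotopic {X Y : Type*} [TopologicalSpace X]
    [TopologicalSpace Y] {f₀ f₁ : C(X, Y)} (h : f₀.Homotopic f₁) (hf₁ : f₁.Nullhomotopic) :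
    f₀.Nullhomotopic :=
  let ⟨y, hy⟩ := hf₁
  ⟨y, h.trans hy⟩

theorem AmbientlyContractible.preimage_of_homotopic_id {X Y : Type*} [TopologicalSpace X]
    [TopologicalSpace Y] {U : Set X} (hU : AmbientlyContractible U) (f : C(X, Y)) (g : C(Y, X))
    (h : (f.comp g).Homotopic (ContinuousMap.id Y)) : AmbientlyContractible (g ⁻¹' U) := by
  have hcomp := (ContinuousMap.Nullhomotopic.comp_left hU (g.restrictPreimage U)).comp_right f
  refine ContinuousMap.Nullhomotopic.of_homotopic ?_ hcomp
  exact (h.comp (.refl ⟨Subtype.val, continuous_subtype_val⟩)).symm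

/-- a space dominated by a Dold space is Dold. -/
theorem stmt7 {X : Type u} {Y : Type v} [TopologicalSpace X] [TopologicalSpace Y]
    (f : C(X, Y)) (g : C(Y, X))
    (h : (f.comp g).Homotopic (ContinuousMap.id Y))
    (hX : IsDoldSpace X) :
    IsDoldSpace Y := by
  obtain ⟨ι, U, hcov, hnum, hcontr⟩ := hX
  set V : ι → Set Y := fun i => g ⁻¹' U i
  refine ⟨range V, Subtype.val, fun y => ?_, ?_, ?_⟩
  · obtain ⟨i, hi⟩ := hcov (g y)
    exact ⟨rangeFactorization V i, hi⟩
  · exact (hnum.preimage g).of_refinement (rangeFactorization V) fun i => subset_rfl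
  · rintro ⟨_, i, rfl⟩
    exact (hcontr i).preimage_of_homotopic_id f g h
end

section
/- Given continuous maps f : A → X and g : A → Y with X and Y Dold spaces, the double mapping cylinder M̂(f,g) = (X ⊔ A × [0,1] ⊔ Y)/∼, where (a,0) ∼ f(a) and (a,1) ∼ g(a), is a Dold space. -/
open unitInterval

universe u v w

/-- The generating relation of the double mapping cylinder of `f : A → X` and `g : A → Y`:
`(a,0) ∼ f a` and `(a,1) ∼ g a`. -/
inductive DoubleMappingCylinderRel {A X Y : Type*} (f : A → X) (g : A → Y) :
    (X ⊕ (A × unitInterval) ⊕ Y) → (X ⊕ (A × unitInterval) ⊕ Y) → Prop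
  | zero (a : A) : DoubleMappingCylinderRel f g (Sum.inr (Sum.inl (a, 0))) (Sum.inl (f a))
  | one (a : A) : DoubleMappingCylinderRel f g (Sum.inr (Sum.inl (a, 1))) (Sum.inr (Sum.inr (g a)))

/-- The double mapping cylinder `(X ⊔ A × [0,1] ⊔ Y)/∼` with `(a,0) ∼ f a`, `(a,1) ∼ g a`. -/
def DoubleMappingCylinder {A X Y : Type*} (f : A → X) (g : A → Y) :=
  Quot (DoubleMappingCylinderRel f g)

instance {A X Y : Type*} [TopologicalSpace A] [TopologicalSpace X] [TopologicalSpace Y]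
    (f : A → X) (g : A → Y) : TopologicalSpace (DoubleMappingCylinder f g) :=
  instTopologicalSpaceQuot

/-!
Each set `U` of a numerable cover of `X` is thickened to the set of points of `U` together with
the cylinder points `(a, t)` with `f a ∈ U` and `t < 3/4`. A homotopy of the whole cylinder that
pushes `[0, 3/4]` down to `0` while fixing both ends deforms this thickening into `U`, so it is
still ambiently contractible. A partition function `φ` on `X` extends to the cylinder by
`φ (f a) * c t`, where the cutoff `c` is `1` at `0`, vanishes on `[2/3, 1]` and satisfies
`c t + c (1 - t) = 1`. Hence the extensions from `X` and, after reversing the cylinder, from `Y`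
add up to a partition of unity subordinate to the thickenings.
-/

open Topology Function Set

section NumerableFamily

variable {Z Z' : Type*} [TopologicalSpace Z] [TopologicalSpace Z']

def IsNumerableFamily {ι : Type*} (U : ι → Set Z) (w : Z → ℝ) : Prop :=
  ∃ F : ι → Z → ℝ, (∀ i, Continuous (F i)) ∧ (∀ i z, F i z ∈ Icc (0 : ℝ) 1) ∧
    (∀ z, HasSum (fun i => F i z) (w z)) ∧ LocallyFinite (fun i => closure (support (F i))) ∧
    ∀ i, closure (support (F i)) ⊆ U i

theorem IsNumerableFamily.preimage_homeomorph {ι : Type*} {U : ι → Set Z} {w : Z → ℝ}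
    (hU : IsNumerableFamily U w) (e : Z' ≃ₜ Z) :
    IsNumerableFamily (fun i => e ⁻¹' U i) (w ∘ e) := by
  obtain ⟨F, hFc, hF01, hFsum, hFlf, hFU⟩ := hU
  have hsupp (i) : closure (support (F i ∘ e)) = e ⁻¹' closure (support (F i)) := by
    rw [support_comp_eq_preimage, e.preimage_closure]
  refine ⟨fun i => F i ∘ e, fun i => (hFc i).comp e.continuous, fun i z => hF01 i (e z),
    fun z => hFsum (e z), ?_, fun i => ?_⟩
  · simpa only [hsupp] using hFlf.preimage_continuous e.continuous
  · rw [hsupp]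
    exact preimage_mono (hFU i)

theorem isNumerableCover_sumElim {ι κ : Type*} {U : ι → Set Z} {V : κ → Set Z}
    {w w' : Z → ℝ} (hU : IsNumerableFamily U w) (hV : IsNumerableFamily V w')
    (hww' : ∀ z, w z + w' z = 1) :
    IsNumerableCover (Sum.elim U V) := by
  obtain ⟨F, hFc, hF01, hFsum, hFlf, hFU⟩ := hU
  obtain ⟨G, hGc, hG01, hGsum, hGlf, hGV⟩ := hV
  refine ⟨Sum.elim F G, ⟨?_, ?_, fun z => hww' z ▸ (hFsum z).sum (hGsum z)⟩, ?_, ?_⟩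
  · rintro (i | j)
    exacts [hFc i, hGc j]
  · rintro (i | j)
    exacts [hF01 i, hG01 j]
  · convert hFlf.sumElim hGlf using 1
    ext (i | j) : 1 <;> rfl
  · rintro (i | j)
    exacts [hFU i, hGV j]

theorem IsNumerableCover.exists_mem_s9 {ι : Type*} {U : ι → Set Z} (hU : IsNumerableCover U)
    (z : Z) : ∃ i, z ∈ U i := by
  obtain ⟨F, ⟨-, -, hFsum⟩, -, hFU⟩ := hU
  by_contra! hz
  have hzero : (fun i => F i z) = 0 := funext fun i =>
    notMem_support.1 fun h => hz i (hFU i (subset_closure h))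
  exact one_ne_zero ((hFsum z).unique (hzero ▸ hasSum_zero))

end NumerableFamily

section AmbientlyContractible

variable {X Z Z' : Type*} [TopologicalSpace X] [TopologicalSpace Z] [TopologicalSpace Z']

theorem AmbientlyContractible.of_homotopic_comp {U : Set X} {W : Set Z}
    (hU : AmbientlyContractible U) (e : C(X, Z)) (ρ : C(W, U))
    (h : ContinuousMap.Homotopic ⟨Subtype.val, continuous_subtype_val⟩
      (e.comp ((⟨Subtype.val, continuous_subtype_val⟩ : C(U, X)).comp ρ))) :
    AmbientlyContractible W := by
  obtain ⟨x₀, hx₀⟩ := hU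
  exact ⟨e x₀, h.trans ((ContinuousMap.Homotopic.refl e).comp
    (hx₀.comp (ContinuousMap.Homotopic.refl ρ)))⟩

theorem AmbientlyContractible.preimage_homeomorph {U : Set Z} (hU : AmbientlyContractible U)
    (e : Z' ≃ₜ Z) : AmbientlyContractible (e ⁻¹' U) :=
  hU.of_homotopic_comp e.symm ⟨fun z => ⟨e z, z.2⟩, by fun_prop⟩ <| by
    convert ContinuousMap.Homotopic.refl _
    ext z
    simp

end AmbientlyContractible

namespace DoubleMappingCylinder

noncomputable def cutoff (t : I) : I :=
  projIcc 0 1 zero_le_one (2 - 3 * (t : ℝ))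

@[fun_prop]
theorem continuous_cutoff : Continuous cutoff :=
  continuous_projIcc.comp (by fun_prop)

@[simp]
theorem cutoff_zero : cutoff 0 = 1 :=
  projIcc_of_right_le _ (by norm_num)

@[simp]
theorem cutoff_one : cutoff 1 = 0 :=
  projIcc_of_le_left _ (by norm_num)

theorem coe_cutoff_add_cutoff_symm (t : I) : (cutoff t : ℝ) + cutoff (σ t) = 1 := by
  simp only [cutoff, coe_projIcc, coe_symm_eq, max_def, min_def]
  split_ifs <;> linarith

theorem le_of_cutoff_ne_zero {t : I} (ht : (cutoff t : ℝ) ≠ 0) : (t : ℝ) ≤ 2 / 3 := by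
  by_contra! h
  exact ht (congrArg Subtype.val (projIcc_of_le_left _ (by linarith)))

noncomputable def squeeze (s t : I) : I :=
  projIcc 0 1 zero_le_one ((t : ℝ) - 3 * s * (1 - t))

@[fun_prop]
theorem continuous_squeeze : Continuous fun p : I × I => squeeze p.1 p.2 :=
  continuous_projIcc.comp (by fun_prop)

@[simp]
theorem squeeze_zero_left (t : I) : squeeze 0 t = t := by
  simp [squeeze]

@[simp]
theorem squeeze_zero_right (s : I) : squeeze s 0 = 0 :=
  projIcc_of_le_left _ (by simpa using s.2.1)

@[simp]
theorem squeeze_one_right (s : I) : squeeze s 1 = 1 := by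
  simp [squeeze]

theorem squeeze_one_left {t : I} (ht : (t : ℝ) < 3 / 4) : squeeze 1 t = 0 :=
  projIcc_of_le_left _ (by simp; linarith)

variable {A X Y : Type*} {f : A → X} {g : A → Y}

variable (f g) in
def mk : X ⊕ (A × I) ⊕ Y → DoubleMappingCylinder f g :=
  Quot.mk _

theorem mk_surjective : Surjective (mk f g) :=
  Quot.mk_surjective

theorem mk_zero (a : A) : mk f g (.inr (.inl (a, 0))) = mk f g (.inl (f a)) :=
  Quot.sound (.zero a)

theorem mk_one (a : A) : mk f g (.inr (.inl (a, 1))) = mk f g (.inr (.inr (g a))) :=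
  Quot.sound (.one a)

def elim {β : Sort*} (p : X → β) (q : A × I → β) (r : Y → β)
    (h₀ : ∀ a, q (a, 0) = p (f a)) (h₁ : ∀ a, q (a, 1) = r (g a)) :
    DoubleMappingCylinder f g → β :=
  Quot.lift (Sum.elim p (Sum.elim q r)) (by rintro _ _ (a | a); exacts [h₀ a, h₁ a])

section elim

variable {β : Sort*} {p : X → β} {q : A × I → β} {r : Y → β}
  {h₀ : ∀ a, q (a, 0) = p (f a)} {h₁ : ∀ a, q (a, 1) = r (g a)}

@[simp]
theorem elim_mk_inl (x : X) : elim p q r h₀ h₁ (mk f g (.inl x)) = p x :=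
  rfl

@[simp]
theorem elim_mk_inr_inl (a : A) (t : I) :
    elim p q r h₀ h₁ (mk f g (.inr (.inl (a, t)))) = q (a, t) :=
  rfl

@[simp]
theorem elim_mk_inr_inr (y : Y) : elim p q r h₀ h₁ (mk f g (.inr (.inr y))) = r y :=
  rfl

end elim

variable (f g) in
def swap : DoubleMappingCylinder f g → DoubleMappingCylinder g f :=
  elim (fun x => mk g f (.inr (.inr x))) (fun p => mk g f (.inr (.inl (p.1, σ p.2))))
    (fun y => mk g f (.inl y)) (fun a => by simp [mk_one]) (fun a => by simp [mk_zero])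

theorem swap_swap (z : DoubleMappingCylinder f g) : swap g f (swap f g z) = z := by
  obtain ⟨(x | ⟨a, t⟩ | y), rfl⟩ := mk_surjective z <;> simp [swap]

variable (f g) in
noncomputable def extendLeft (φ : X → ℝ) : DoubleMappingCylinder f g → ℝ :=
  elim φ (fun p => φ (f p.1) * cutoff p.2) 0 (fun a => by simp) (fun a => by simp)

theorem extendLeft_one_add_extendLeft_one_swap (z : DoubleMappingCylinder f g) :
    extendLeft f g 1 z + extendLeft g f 1 (swap f g z) = 1 := by
  obtain ⟨(x | ⟨a, t⟩ | y), rfl⟩ := mk_surjective z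
  · simp [extendLeft, swap]
  · simpa [extendLeft, swap] using coe_cutoff_add_cutoff_symm t
  · simp [extendLeft, swap]

theorem hasSum_extendLeft {ι : Type*} {φ : ι → X → ℝ} {s : X → ℝ}
    (hφ : ∀ x, HasSum (fun i => φ i x) (s x)) (z : DoubleMappingCylinder f g) :
    HasSum (fun i => extendLeft f g (φ i) z) (extendLeft f g s z) := by
  obtain ⟨(x | ⟨a, t⟩ | y), rfl⟩ := mk_surjective z
  · exact hφ x
  · exact (hφ (f a)).mul_right _
  · exact hasSum_zero

theorem extendLeft_mem_Icc {φ : X → ℝ} (hφ : ∀ x, φ x ∈ Icc (0 : ℝ) 1)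
    (z : DoubleMappingCylinder f g) : extendLeft f g φ z ∈ Icc (0 : ℝ) 1 := by
  obtain ⟨(x | ⟨a, t⟩ | y), rfl⟩ := mk_surjective z
  · exact hφ x
  · exact unitInterval.mul_mem (hφ (f a)) (cutoff t).2
  · exact unitInterval.zero_mem

variable (f g) in
def leftSet (U : Set X) (T : Set I) : Set (DoubleMappingCylinder f g) :=
  mk f g '' Sum.elim U (Sum.elim ((f ⁻¹' U) ×ˢ T) (∅ : Set Y))

variable {U U' : Set X} {T T' : Set I}

theorem preimage_mk_leftSet (h₀ : 0 ∈ T) (h₁ : 1 ∉ T) :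
    mk f g ⁻¹' leftSet f g U T = Sum.elim U (Sum.elim ((f ⁻¹' U) ×ˢ T) (∅ : Set Y)) := by
  -- membership descends to the quotient, so the image is saturated
  let χ : DoubleMappingCylinder f g → Prop :=
    elim (· ∈ U) (fun p => f p.1 ∈ U ∧ p.2 ∈ T) (fun _ => False)
      (fun _ => propext (and_iff_left h₀))
      (fun _ => propext (iff_false_intro fun h => h₁ h.2))
  ext s
  exact ⟨fun ⟨s', hs', he⟩ => (congrArg χ he).mp hs', fun hs => ⟨s, hs, rfl⟩⟩

theorem leftSet_mono (hU : U ⊆ U') (hT : T ⊆ T') : leftSet f g U T ⊆ leftSet f g U' T' :=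
  image_mono <| by rintro (x | p | y) h; exacts [hU h, ⟨hU h.1, hT h.2⟩, h]

theorem leftSet_le_subset_leftSet_lt (hU : U ⊆ U') :
    leftSet f g U {t | (t : ℝ) ≤ 2 / 3} ⊆ leftSet f g U' {t | (t : ℝ) < 3 / 4} :=
  leftSet_mono hU fun t (ht : (t : ℝ) ≤ 2 / 3) => show (t : ℝ) < 3 / 4 by linarith

theorem exists_forall_mem_leftSet {z : DoubleMappingCylinder f g}
    (hz : z ∈ leftSet f g univ T) : ∃ x, ∀ V, x ∈ V → z ∈ leftSet f g V T := by
  obtain ⟨(x | ⟨a, t⟩ | y), hs, rfl⟩ := hz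
  · exact ⟨x, fun V hV => ⟨.inl x, hV, rfl⟩⟩
  · exact ⟨f a, fun V hV => ⟨.inr (.inl (a, t)), ⟨hV, hs.2⟩, rfl⟩⟩
  · exact hs.elim

theorem nonempty_inter_of_nonempty_leftSet_inter (h₀ : 0 ∈ T') (h₁ : 1 ∉ T')
    (h : (leftSet f g U T ∩ leftSet f g U' T').Nonempty) : (U ∩ U').Nonempty := by
  obtain ⟨_, ⟨s, hs, rfl⟩, hs'⟩ := h
  rw [← mem_preimage, preimage_mk_leftSet h₀ h₁] at hs'
  rcases s with x | ⟨a, t⟩ | y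
  exacts [⟨x, hs, hs'⟩, ⟨f a, hs.1, hs'.1⟩, hs.elim]

variable [TopologicalSpace A] [TopologicalSpace X] [TopologicalSpace Y]

theorem isQuotientMap_mk : IsQuotientMap (mk f g) :=
  isQuotientMap_quot_mk

@[fun_prop]
theorem continuous_mk : Continuous (mk f g) :=
  continuous_quot_mk

theorem continuous_elim {β : Type*} [TopologicalSpace β] {p : X → β} {q : A × I → β}
    {r : Y → β} (hp : Continuous p) (hq : Continuous q) (hr : Continuous r)
    (h₀ : ∀ a, q (a, 0) = p (f a)) (h₁ : ∀ a, q (a, 1) = r (g a)) :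
    Continuous (elim p q r h₀ h₁) :=
  continuous_quot_lift _ (hp.sumElim (hq.sumElim hr))

variable (f g) in
def swapHomeomorph : DoubleMappingCylinder f g ≃ₜ DoubleMappingCylinder g f where
  toFun := swap f g
  invFun := swap g f
  left_inv := swap_swap
  right_inv := swap_swap
  continuous_toFun := continuous_elim (by fun_prop) (by fun_prop) (by fun_prop) _ _
  continuous_invFun := continuous_elim (by fun_prop) (by fun_prop) (by fun_prop) _ _

theorem continuous_extendLeft (hf : Continuous f) {φ : X → ℝ} (hφ : Continuous φ) :
    Continuous (extendLeft f g φ) :=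
  continuous_elim hφ (by fun_prop) continuous_const _ _

theorem isOpen_leftSet (hf : Continuous f) (hU : IsOpen U) (hT : IsOpen T) (h₀ : 0 ∈ T)
    (h₁ : 1 ∉ T) : IsOpen (leftSet f g U T) := by
  rw [← isQuotientMap_mk.isOpen_preimage, preimage_mk_leftSet h₀ h₁]
  exact isOpen_sum_iff.2 ⟨hU, isOpen_sum_iff.2 ⟨(hU.preimage hf).prod hT, isOpen_empty⟩⟩

theorem isClosed_leftSet (hf : Continuous f) (hU : IsClosed U) (hT : IsClosed T) (h₀ : 0 ∈ T)
    (h₁ : 1 ∉ T) : IsClosed (leftSet f g U T) := by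
  rw [← isQuotientMap_mk.isClosed_preimage, preimage_mk_leftSet h₀ h₁]
  exact isClosed_sum_iff.2
    ⟨hU, isClosed_sum_iff.2 ⟨(hU.preimage hf).prod hT, isClosed_empty⟩⟩

theorem isOpen_leftSet_lt (hf : Continuous f) (hU : IsOpen U) :
    IsOpen (leftSet f g U {t | (t : ℝ) < 3 / 4}) :=
  isOpen_leftSet hf hU (isOpen_lt continuous_subtype_val continuous_const) (by norm_num)
    (by norm_num)

theorem isClosed_leftSet_le (hf : Continuous f) (hU : IsClosed U) :
    IsClosed (leftSet f g U {t | (t : ℝ) ≤ 2 / 3}) :=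
  isClosed_leftSet hf hU (isClosed_le continuous_subtype_val continuous_const) (by norm_num)
    (by norm_num)

theorem isInducing_mk_inl (hf : Continuous f) : IsInducing (mk f g ∘ Sum.inl) := by
  refine ⟨le_antisymm (continuous_iff_le_induced.1 (by fun_prop)) fun V hV =>
    isOpen_induced_iff.2 ⟨_, isOpen_leftSet_lt hf hV, ?_⟩⟩
  rw [preimage_comp, preimage_mk_leftSet (by norm_num) (by norm_num)]
  rfl

theorem locallyFinite_leftSet (hf : Continuous f) {ι : Type*} {C : ι → Set X}
    (hC : LocallyFinite C) :
    LocallyFinite fun i => leftSet f g (C i) {t | (t : ℝ) ≤ 2 / 3} := by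
  intro z
  by_cases hz : z ∈ leftSet f g univ {t | (t : ℝ) < 3 / 4}
  · obtain ⟨x, hx⟩ := exists_forall_mem_leftSet hz
    obtain ⟨N, hN, hNfin⟩ := hC x
    obtain ⟨N', hN'N, hN'open, hxN'⟩ := mem_nhds_iff.1 hN
    refine ⟨_, (isOpen_leftSet_lt hf hN'open).mem_nhds (hx N' hxN'),
      hNfin.subset fun i hi => ?_⟩
    exact (nonempty_inter_of_nonempty_leftSet_inter (by norm_num) (by norm_num) hi).mono
      (inter_subset_inter_right _ hN'N)
  · refine ⟨_, (isClosed_leftSet_le hf isClosed_univ).isOpen_compl.mem_nhds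
      fun h => hz (leftSet_le_subset_leftSet_lt subset_rfl h), ?_⟩
    convert finite_empty
    refine eq_empty_of_forall_notMem fun i ⟨w, hwC, hw⟩ => hw ?_
    exact leftSet_mono (subset_univ _) subset_rfl hwC

theorem closure_support_extendLeft_subset (hf : Continuous f) (φ : X → ℝ) :
    closure (support (extendLeft f g φ)) ⊆
      leftSet f g (closure (support φ)) {t | (t : ℝ) ≤ 2 / 3} := by
  refine closure_minimal ?_ (isClosed_leftSet_le hf isClosed_closure)
  intro z hz
  obtain ⟨(x | ⟨a, t⟩ | y), rfl⟩ := mk_surjective z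
  · exact ⟨.inl x, subset_closure hz, rfl⟩
  · have hz : φ (f a) * cutoff t ≠ 0 := hz
    exact ⟨.inr (.inl (a, t)), ⟨subset_closure (left_ne_zero_of_mul hz),
      le_of_cutoff_ne_zero (right_ne_zero_of_mul hz)⟩, rfl⟩
  · exact (hz rfl).elim

theorem isNumerableFamily_leftSet (hf : Continuous f) {ι : Type*} {U : ι → Set X}
    (hU : IsNumerableCover U) :
    IsNumerableFamily (fun i => leftSet f g (U i) {t | (t : ℝ) < 3 / 4}) (extendLeft f g 1) := by
  obtain ⟨φ, ⟨hφc, hφ01, hφsum⟩, hφlf, hφU⟩ := hU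
  refine ⟨fun i => extendLeft f g (φ i), fun i => continuous_extendLeft hf (hφc i),
    fun i => extendLeft_mem_Icc (hφ01 i), hasSum_extendLeft (s := 1) hφsum,
    (locallyFinite_leftSet hf hφlf).subset fun i => closure_support_extendLeft_subset hf (φ i),
    fun i => (closure_support_extendLeft_subset hf (φ i)).trans
      (leftSet_le_subset_leftSet_lt (hφU i))⟩

variable (f g) in
noncomputable def squeezeLeftPath :
    C(DoubleMappingCylinder f g, C(I, DoubleMappingCylinder f g)) :=
  ⟨elim (fun x => .const I (mk f g (.inl x)))
    (ContinuousMap.curry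
      ⟨fun q : (A × I) × I => mk f g (.inr (.inl (q.1.1, squeeze q.2 q.1.2))), by fun_prop⟩)
    (fun y => .const I (mk f g (.inr (.inr y))))
    (fun a => by ext s; simp [mk_zero]) (fun a => by ext s; simp [mk_one]),
  continuous_elim (by fun_prop) (ContinuousMap.continuous _) (by fun_prop) _ _⟩

variable (f g) in
noncomputable def collapseLeft : C(DoubleMappingCylinder f g, DoubleMappingCylinder f g) :=
  ⟨fun z => squeezeLeftPath f g z 1, by fun_prop⟩

variable (f g) in
noncomputable def squeezeLeft : (ContinuousMap.id (DoubleMappingCylinder f g)).Homotopy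
    (collapseLeft f g) where
  toFun p := squeezeLeftPath f g p.2 p.1
  continuous_toFun := by fun_prop
  map_zero_left z := by
    obtain ⟨(x | ⟨a, t⟩ | y), rfl⟩ := mk_surjective z <;> simp [squeezeLeftPath]
  map_one_left _ := rfl

theorem ambientlyContractible_leftSet (hf : Continuous f) {U : Set X}
    (hU : AmbientlyContractible U) :
    AmbientlyContractible (leftSet f g U {t | (t : ℝ) < 3 / 4}) := by
  set W := leftSet f g U {t | (t : ℝ) < 3 / 4}
  have hcollapse : ∀ z : W, ∃ x ∈ U, collapseLeft f g z = mk f g (.inl x) := by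
    rintro ⟨_, (x | ⟨a, t⟩ | y), hs, rfl⟩
    · exact ⟨x, hs, rfl⟩
    · refine ⟨f a, hs.1, ?_⟩
      simp [collapseLeft, squeezeLeftPath, squeeze_one_left hs.2, mk_zero]
    · exact hs.elim
  choose ρ hρU hρ using hcollapse
  have hρc : Continuous ρ := (isInducing_mk_inl (g := g) hf).continuous_iff.2 <| by
    simpa only [comp_def, ← hρ] using (collapseLeft f g).continuous.comp continuous_subtype_val
  refine hU.of_homotopic_comp ⟨mk f g ∘ .inl, by fun_prop⟩
    ⟨fun z => ⟨ρ z, hρU z⟩, hρc.subtype_mk _⟩ ?_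
  convert ContinuousMap.Homotopic.comp ⟨squeezeLeft f g⟩
    (.refl ⟨Subtype.val, continuous_subtype_val⟩) using 1 <;> ext z
  exacts [rfl, (hρ z).symm]

end DoubleMappingCylinder

open DoubleMappingCylinder

/-- the double mapping cylinder of maps into Dold spaces is a Dold space. -/
theorem stmt9 {A X Y : Type u} [TopologicalSpace A] [TopologicalSpace X] [TopologicalSpace Y]
    (f : A → X) (g : A → Y) (hf : Continuous f) (hg : Continuous g)
    (hX : IsDoldSpace X) (hY : IsDoldSpace Y) :
    IsDoldSpace (DoubleMappingCylinder f g) := by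
  obtain ⟨ιX, U, -, hU, hUc⟩ := hX
  obtain ⟨ιY, V, -, hV, hVc⟩ := hY
  let e := swapHomeomorph f g
  have hcover : IsNumerableCover (Sum.elim (fun i => leftSet f g (U i) {t | (t : ℝ) < 3 / 4})
      (fun j => e ⁻¹' leftSet g f (V j) {t | (t : ℝ) < 3 / 4})) :=
    isNumerableCover_sumElim (isNumerableFamily_leftSet hf hU)
      ((isNumerableFamily_leftSet hg hV).preimage_homeomorph e)
      extendLeft_one_add_extendLeft_one_swap
  refine ⟨ιX ⊕ ιY, _, hcover.exists_mem_s9, hcover, ?_⟩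
  rintro (i | j)
  · exact ambientlyContractible_leftSet hf (hUc i)
  · exact (ambientlyContractible_leftSet hg (hVc j)).preimage_homeomorph e
end

section
/- For any continuous map f : A → X into a Dold space X, the unreduced mapping cone of f (the quotient of X ⊔ (A × [0,1]) identifying (a,1) with f(a) and collapsing A × {0} to a point) is a Dold space. -/
/-!
The cone is covered by its lower half `{height ≤ 1/2}` and by the sets `pushUp⁻¹ (X ∩ Uᵢ)`,
where `Uᵢ` runs over a numerable cover of `X` by ambiently contractible sets. Sliding the cone
coordinate down (`pushDown`) deforms the lower half to the apex; sliding it up (`pushUp`) moves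
every point of height `≥ 1/4` into `X`, so `pushUp⁻¹ (X ∩ Uᵢ)` deforms into `Uᵢ` and is then
contracted inside `X`. The partition of unity consists of `apexBump ∘ height`, equal to `1` below
height `1/4` and to `0` above `1/2`, and of the functions `φᵢ` of `X` extended to the cone and
multiplied by `1 - apexBump ∘ height`. Since `X` is a closed subspace of the cone, local finiteness
of their supports is pulled back from `X` along `pushUp`.
-/

open unitInterval

universe u v w

/-- The generating relation of the unreduced mapping cone of `f : A → X`:
`(a,1) ∼ f a` and `A × {0}` is collapsed to a point. -/
inductive MappingConeRel {A X : Type*} (f : A → X) :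
    (X ⊕ (A × unitInterval)) → (X ⊕ (A × unitInterval)) → Prop
  | one (a : A) : MappingConeRel f (Sum.inr (a, 1)) (Sum.inl (f a))
  | zero (a b : A) : MappingConeRel f (Sum.inr (a, 0)) (Sum.inr (b, 0))

/-- The unreduced mapping cone of `f : A → X`. -/
def UnreducedMappingCone {A X : Type*} (f : A → X) := Quot (MappingConeRel f)

instance {A X : Type*} [TopologicalSpace A] [TopologicalSpace X] (f : A → X) :
    TopologicalSpace (UnreducedMappingCone f) :=
  instTopologicalSpaceQuot

open Set Function Topology

theorem isDoldSpace_of_isEmpty {X : Type u} [TopologicalSpace X] [IsEmpty X] : IsDoldSpace X :=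
  ⟨PEmpty, PEmpty.elim, isEmptyElim,
    ⟨PEmpty.elim, ⟨nofun, nofun, isEmptyElim⟩, isEmptyElim, nofun⟩, nofun⟩

section AmbientlyContractible

variable {X Y : Type*} [TopologicalSpace X] [TopologicalSpace Y]

theorem ambientlyContractibleTo_of_isEmpty {U : Set Y} [IsEmpty U] (y₀ : Y) :
    AmbientlyContractibleTo U y₀ := by
  rw [AmbientlyContractibleTo, Subsingleton.elim (ContinuousMap.const U y₀)]

theorem AmbientlyContractibleTo.of_homotopic_id {g : C(Y, Y)}
    (hg : (ContinuousMap.id Y).Homotopic g) {U : Set Y} {y₀ : Y} (hU : ∀ y ∈ U, g y = y₀) :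
    AmbientlyContractibleTo U y₀ := by
  have hgU : g.restrict U = .const U y₀ := by ext y; exact hU y y.2
  have h : ((ContinuousMap.id Y).restrict U).Homotopic (g.restrict U) :=
    hg.comp (.refl ((ContinuousMap.id Y).restrict U))
  rwa [hgU] at h

theorem AmbientlyContractibleTo.of_homotopic_id_of_mapsTo {j : C(X, Y)} (hj : IsEmbedding j)
    {S : Set X} {x₀ : X} (hS : AmbientlyContractibleTo S x₀) {g : C(Y, Y)}
    (hg : (ContinuousMap.id Y).Homotopic g) {U : Set Y} (hU : MapsTo g U (j '' S)) :
    AmbientlyContractibleTo U (j x₀) := by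
  choose e heS hje using fun y : U => hU y.2
  have he : Continuous e := by
    rw [hj.continuous_iff]
    simp only [comp_def, hje]
    fun_prop
  let e' : C(U, S) := ⟨fun y => ⟨e y, heS y⟩, he.subtype_mk _⟩
  have hgU : g.restrict U = j.comp ((ContinuousMap.id X).restrict S |>.comp e') := by
    ext y; exact (hje y).symm
  have h : ((ContinuousMap.id Y).restrict U).Homotopic (g.restrict U) :=
    hg.comp (.refl ((ContinuousMap.id Y).restrict U))
  rw [hgU] at h
  exact h.trans ((ContinuousMap.Homotopic.refl j).comp (hS.comp (.refl e')))

end AmbientlyContractible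

theorem LocallyFinite.image_of_isClosedEmbedding {X Y ι : Type*} [TopologicalSpace X]
    [TopologicalSpace Y] {s : ι → Set X} {j : X → Y} (hs : LocallyFinite s)
    (hj : IsClosedEmbedding j) : LocallyFinite fun i => j '' s i := by
  intro y
  by_cases hy : y ∈ range j
  · obtain ⟨x, rfl⟩ := hy
    obtain ⟨N, hN, hfin⟩ := hs x
    rw [hj.isInducing.nhds_eq_comap] at hN
    obtain ⟨O, hO, hON⟩ := hN
    refine ⟨O, hO, hfin.subset ?_⟩
    rintro i ⟨_, ⟨x', hx', rfl⟩, hx'O⟩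
    exact ⟨x', hx', hON hx'O⟩
  · refine ⟨(range j)ᶜ, hj.isClosed_range.isOpen_compl.mem_nhds hy, finite_empty.subset ?_⟩
    rintro i ⟨_, ⟨x, -, rfl⟩, hx⟩
    exact hx (mem_range_self x)

theorem HasSum.option {α M : Type*} [AddCommMonoid M] [TopologicalSpace M] [ContinuousAdd M]
    {g : Option α → M} {a : M} (h : HasSum (fun i => g (some i)) a) : HasSum g (g none + a) := by
  rw [← (Equiv.optionEquivSumPUnit.{0} α).symm.hasSum_iff, add_comm]
  exact h.sum (hasSum_unique _)

namespace UnreducedMappingCone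

section

variable {A X Y : Type*} {f : A → X}

variable (f) in
def incl (x : X) : UnreducedMappingCone f := Quot.mk _ (.inl x)

variable (f) in
def mk (a : A) (t : I) : UnreducedMappingCone f := Quot.mk _ (.inr (a, t))

theorem mk_one (a : A) : mk f a 1 = incl f (f a) := Quot.sound (.one a)

theorem mk_zero (a b : A) : mk f a 0 = mk f b 0 := Quot.sound (.zero a b)

@[elab_as_elim]
theorem ind {p : UnreducedMappingCone f → Prop} (incl : ∀ x, p (incl f x))
    (mk : ∀ a t, p (mk f a t)) (c : UnreducedMappingCone f) : p c := by
  induction c using Quot.ind with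
  | mk u => rcases u with x | ⟨a, t⟩; exacts [incl x, mk a t]

variable (f) in
def lift (g : X → Y) (k : A × I → Y) (h₁ : ∀ a, k (a, 1) = g (f a))
    (h₀ : ∀ a b, k (a, 0) = k (b, 0)) : UnreducedMappingCone f → Y :=
  Quot.lift (Sum.elim g k) (by rintro _ _ (⟨a⟩ | ⟨a, b⟩); exacts [h₁ a, h₀ a b])

section lift

variable {g : X → Y} {k : A × I → Y} {h₁ : ∀ a, k (a, 1) = g (f a)}
  {h₀ : ∀ a b, k (a, 0) = k (b, 0)}

@[simp]
theorem lift_incl (x : X) : lift f g k h₁ h₀ (incl f x) = g x := rfl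

@[simp]
theorem lift_mk (a : A) (t : I) : lift f g k h₁ h₀ (mk f a t) = k (a, t) := rfl

theorem continuous_lift [TopologicalSpace A] [TopologicalSpace X] [TopologicalSpace Y]
    (hg : Continuous g) (hk : Continuous k) : Continuous (lift f g k h₁ h₀) :=
  continuous_quot_lift _ (hg.sumElim hk)

end lift

variable (f) in
def height : UnreducedMappingCone f → I :=
  lift f (fun _ => 1) Prod.snd (fun _ => rfl) (fun _ _ => rfl)

@[simp] theorem height_incl (x : X) : height f (incl f x) = 1 := rfl

@[simp] theorem height_mk (a : A) (t : I) : height f (mk f a t) = t := rfl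

variable (f) in
def lowerHalf : Set (UnreducedMappingCone f) := {c | (height f c : ℝ) ≤ 1 / 2}

variable (f) in
noncomputable def inclInv : UnreducedMappingCone f → Option X :=
  lift f some (fun p => if p.2 = 1 then some (f p.1) else none) (by simp) (by simp)

theorem incl_eq_iff_inclInv_eq {x : X} {c : UnreducedMappingCone f} :
    incl f x = c ↔ inclInv f c = some x := by
  refine ⟨fun h => h ▸ rfl, fun h => ?_⟩
  induction c using ind with
  | incl y => simp_all [inclInv]
  | mk a t =>
    by_cases ht : t = 1
    · simp_all [inclInv, mk_one]
    · simp [inclInv, ht] at h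

theorem incl_injective : Injective (incl f) := fun x y h => by
  simpa [inclInv] using (incl_eq_iff_inclInv_eq.1 h).symm

noncomputable def apexBump : C(I, I) :=
  ⟨fun t => projIcc 0 1 zero_le_one (2 - 4 * t), continuous_projIcc.comp (by fun_prop)⟩

theorem apexBump_of_le {t : I} (ht : (t : ℝ) ≤ 1 / 4) : apexBump t = 1 :=
  projIcc_of_right_le zero_le_one (by linarith)

theorem apexBump_of_ge {t : I} (ht : 1 / 2 ≤ (t : ℝ)) : apexBump t = 0 :=
  projIcc_of_le_left zero_le_one (by linarith)

@[simp] theorem apexBump_zero : apexBump 0 = 1 := apexBump_of_le (by norm_num)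

@[simp] theorem apexBump_one : apexBump 1 = 0 := apexBump_of_ge (by norm_num)

theorem support_apexBump_height_subset :
    support (fun c => (apexBump (height f c) : ℝ)) ⊆ lowerHalf f := fun c hc => by
  by_contra! h
  exact hc (by simp [apexBump_of_ge (le_of_lt (not_le.1 h))])

variable (f) in
noncomputable def extend (g : X → ℝ) : UnreducedMappingCone f → ℝ :=
  lift f g (fun p => (1 - apexBump p.2) * g (f p.1)) (fun a => by simp) (fun a b => by simp)

@[simp] theorem extend_mk (g : X → ℝ) (a : A) (t : I) :
    extend f g (mk f a t) = (1 - apexBump t) * g (f a) := rfl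

end

variable {A X ι : Type*} [TopologicalSpace A] [TopologicalSpace X] {f : A → X}

@[fun_prop]
theorem continuous_incl : Continuous (incl f) := continuous_quot_mk.comp continuous_inl

@[fun_prop]
theorem _root_.Continuous.mappingConeMk {Z : Type*} [TopologicalSpace Z] {g : Z → A} {h : Z → I}
    (hg : Continuous g) (hh : Continuous h) : Continuous fun z => mk f (g z) (h z) :=
  continuous_quot_mk.comp (continuous_inr.comp (hg.prodMk hh))

theorem continuous_height : Continuous (height f) :=
  continuous_lift continuous_const continuous_snd

theorem continuous_extend (hf : Continuous f) {g : X → ℝ} (hg : Continuous g) :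
    Continuous (extend f g) :=
  continuous_lift hg (by fun_prop)

theorem isClosedEmbedding_incl (hf : Continuous f) : IsClosedEmbedding (incl f) := by
  refine .of_continuous_injective_isClosedMap continuous_incl incl_injective fun D hD => ?_
  have hD' : incl f '' D = inclInv f ⁻¹' (some '' D) := by
    ext c
    simp only [mem_image, mem_preimage, incl_eq_iff_inclInv_eq, eq_comm (a := some _)]
  rw [hD']
  refine (isQuotientMap_quot_mk (r := MappingConeRel f)).isClosed_preimage.1
    (isClosed_sum_iff.2 ⟨?_, ?_⟩)
  · change IsClosed (some ⁻¹' (some '' D))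
    rwa [preimage_image_eq _ (Option.some_injective _)]
  · change IsClosed ((fun p : A × I => if p.2 = 1 then some (f p.1) else none) ⁻¹' (some '' D))
    have : (fun p : A × I => if p.2 = 1 then some (f p.1) else none) ⁻¹' (some '' D) =
        (f ⁻¹' D) ×ˢ {1} := by
      ext ⟨a, t⟩
      by_cases ht : t = 1 <;> simp [ht]
    rw [this]
    exact (hD.preimage hf).prod isClosed_singleton

variable (f) in
def reparam (φ : C(I × I, I)) (h₁ : ∀ s, φ (s, 1) = 1) (h₀ : ∀ s, φ (s, 0) = 0) :
    C(I × UnreducedMappingCone f, UnreducedMappingCone f) :=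
  .comp (.uncurry ⟨lift f (fun x => .const I (incl f x))
      (ContinuousMap.curry (⟨fun p => mk f p.1.1 (φ (p.2, p.1.2)), by fun_prop⟩ :
        C((A × I) × I, UnreducedMappingCone f)))
      (fun a => by ext s; simp [h₁, mk_one]) (fun a b => by ext s; simp [h₀, mk_zero a b]),
    continuous_lift (by fun_prop) (ContinuousMap.continuous _)⟩) .prodSwap

section reparam

variable {φ : C(I × I, I)} {h₁ : ∀ s, φ (s, 1) = 1} {h₀ : ∀ s, φ (s, 0) = 0}

@[simp]
theorem reparam_incl (s : I) (x : X) : reparam f φ h₁ h₀ (s, incl f x) = incl f x := rfl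

@[simp]
theorem reparam_mk (s : I) (a : A) (t : I) :
    reparam f φ h₁ h₀ (s, mk f a t) = mk f a (φ (s, t)) := rfl

theorem homotopic_id_reparam (hφ : ∀ t, φ (0, t) = t) :
    (ContinuousMap.id _).Homotopic ((reparam f φ h₁ h₀).curry 1) :=
  ⟨{ toContinuousMap := reparam f φ h₁ h₀
     map_zero_left := fun c => by induction c using ind <;> simp [hφ]
     map_one_left := fun _ => rfl }⟩

end reparam

noncomputable def upReparam : C(I × I, I) :=
  ⟨fun p => projIcc 0 1 zero_le_one (p.2 * (1 + 3 * p.1)), continuous_projIcc.comp (by fun_prop)⟩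

noncomputable def downReparam : C(I × I, I) :=
  ⟨fun p => projIcc 0 1 zero_le_one (p.2 - 2 * p.1 * (1 - p.2)),
    continuous_projIcc.comp (by fun_prop)⟩

theorem upReparam_one (s : I) : upReparam (s, 1) = 1 :=
  projIcc_of_right_le zero_le_one (by simp [nonneg s])

theorem upReparam_zero (s : I) : upReparam (s, 0) = 0 :=
  projIcc_of_le_left zero_le_one (by simp)

theorem upReparam_start (t : I) : upReparam (0, t) = t := by
  simp [upReparam]

theorem upReparam_finish {t : I} (ht : 1 / 4 ≤ (t : ℝ)) : upReparam (1, t) = 1 :=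
  projIcc_of_right_le zero_le_one (by simp; linarith)

theorem downReparam_one (s : I) : downReparam (s, 1) = 1 :=
  projIcc_of_right_le zero_le_one (by simp)

theorem downReparam_zero (s : I) : downReparam (s, 0) = 0 :=
  projIcc_of_le_left zero_le_one (by simp [nonneg s])

theorem downReparam_start (t : I) : downReparam (0, t) = t := by
  simp [downReparam]

theorem downReparam_finish {t : I} (ht : (t : ℝ) ≤ 1 / 2) : downReparam (1, t) = 0 :=
  projIcc_of_le_left zero_le_one (by simp; linarith)

variable (f) in
noncomputable def pushUp : C(UnreducedMappingCone f, UnreducedMappingCone f) :=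
  (reparam f upReparam upReparam_one upReparam_zero).curry 1

variable (f) in
noncomputable def pushDown : C(UnreducedMappingCone f, UnreducedMappingCone f) :=
  (reparam f downReparam downReparam_one downReparam_zero).curry 1

theorem homotopic_id_pushUp : (ContinuousMap.id _).Homotopic (pushUp f) :=
  homotopic_id_reparam upReparam_start

theorem homotopic_id_pushDown : (ContinuousMap.id _).Homotopic (pushDown f) :=
  homotopic_id_reparam downReparam_start

theorem pushUp_mk_of_le {a : A} {t : I} (ht : 1 / 4 ≤ (t : ℝ)) :
    pushUp f (mk f a t) = incl f (f a) := by
  rw [← mk_one, ← upReparam_finish ht]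
  rfl

theorem pushDown_mk_of_le {a : A} {t : I} (ht : (t : ℝ) ≤ 1 / 2) :
    pushDown f (mk f a t) = mk f a 0 := by
  rw [← downReparam_finish ht]
  rfl

theorem pushUp_mem_range_incl {c : UnreducedMappingCone f} (hc : 1 / 4 ≤ (height f c : ℝ)) :
    pushUp f c ∈ range (incl f) := by
  induction c using ind with
  | incl x => exact ⟨x, rfl⟩
  | mk a t => exact ⟨f a, (pushUp_mk_of_le hc).symm⟩

theorem support_extend_subset (g : X → ℝ) :
    support (extend f g) ⊆ pushUp f ⁻¹' (incl f '' support g) := by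
  intro c hc
  induction c using ind with
  | incl x => exact ⟨x, hc, rfl⟩
  | mk a t =>
    obtain ⟨hbump, hg⟩ := mul_ne_zero_iff.1 hc
    have ht : 1 / 4 ≤ (t : ℝ) := by
      by_contra! ht
      exact hbump (by rw [apexBump_of_le ht.le]; simp)
    exact ⟨f a, hg, (pushUp_mk_of_le ht).symm⟩

theorem ambientlyContractible_lowerHalf [Nonempty (UnreducedMappingCone f)] :
    AmbientlyContractible (lowerHalf f) := by
  rcases isEmpty_or_nonempty A with hA | ⟨⟨a₀⟩⟩
  · have : IsEmpty (lowerHalf f) := ⟨fun ⟨c, hc⟩ => by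
      induction c using ind with
      | incl x => norm_num [lowerHalf] at hc
      | mk a t => exact isEmptyElim a⟩
    exact ⟨Classical.arbitrary _, ambientlyContractibleTo_of_isEmpty _⟩
  · refine ⟨mk f a₀ 0, .of_homotopic_id homotopic_id_pushDown fun c hc => ?_⟩
    induction c using ind with
    | incl x => norm_num [lowerHalf] at hc
    | mk a t => rw [pushDown_mk_of_le (t := t) hc, mk_zero]

theorem ambientlyContractible_preimage_pushUp (hf : Continuous f) {S : Set X}
    (hS : AmbientlyContractible S) : AmbientlyContractible (pushUp f ⁻¹' (incl f '' S)) :=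
  let ⟨_, hS⟩ := hS
  ⟨_, hS.of_homotopic_id_of_mapsTo (j := ⟨incl f, continuous_incl⟩)
    (isClosedEmbedding_incl hf).isEmbedding homotopic_id_pushUp (mapsTo_preimage _ _)⟩
variable (f) in
def cover (U : ι → Set X) : Option ι → Set (UnreducedMappingCone f) :=
  Option.elim' (lowerHalf f) fun i => pushUp f ⁻¹' (incl f '' U i)

theorem cover_mono {U V : ι → Set X} (h : ∀ i, U i ⊆ V i) :
    ∀ o, cover f U o ⊆ cover f V o
  | none => subset_rfl
  | some i => preimage_mono (image_mono (h i))

theorem exists_mem_cover {U : ι → Set X} (hU : ∀ x, ∃ i, x ∈ U i)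
    (c : UnreducedMappingCone f) : ∃ o, c ∈ cover f U o := by
  by_cases hc : (height f c : ℝ) ≤ 1 / 2
  · exact ⟨none, hc⟩
  · obtain ⟨x, hx⟩ := pushUp_mem_range_incl (c := c) (by linarith)
    obtain ⟨i, hi⟩ := hU x
    exact ⟨some i, x, hi, hx⟩

theorem isClosed_cover (hf : Continuous f) {U : ι → Set X} (hU : ∀ i, IsClosed (U i)) :
    ∀ o, IsClosed (cover f U o)
  | none => isClosed_le (continuous_subtype_val.comp continuous_height) continuous_const
  | some i => ((isClosedEmbedding_incl hf).isClosedMap _ (hU i)).preimage (pushUp f).continuous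

theorem locallyFinite_cover (hf : Continuous f) {U : ι → Set X} (hU : LocallyFinite U) :
    LocallyFinite (cover f U) :=
  ((hU.image_of_isClosedEmbedding (isClosedEmbedding_incl hf)).preimage_continuous
    (pushUp f).continuous).option_elim' _

theorem ambientlyContractible_cover [Nonempty (UnreducedMappingCone f)] (hf : Continuous f)
    {U : ι → Set X} (hU : ∀ i, AmbientlyContractible (U i)) :
    ∀ o, AmbientlyContractible (cover f U o)
  | none => ambientlyContractible_lowerHalf
  | some i => ambientlyContractible_preimage_pushUp hf (hU i)

variable (f) in
noncomputable def partitionOfUnity (φ : ι → X → ℝ) : Option ι → UnreducedMappingCone f → ℝ :=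
  Option.elim' (fun c => apexBump (height f c)) fun i => extend f (φ i)

theorem isPartitionOfUnity_partitionOfUnity (hf : Continuous f) {φ : ι → X → ℝ}
    (hφ : IsPartitionOfUnity φ) : IsPartitionOfUnity (partitionOfUnity f φ) := by
  obtain ⟨hcont, hmem, hsum⟩ := hφ
  refine ⟨?_, ?_, fun c => ?_⟩
  · rintro (_ | i)
    · exact continuous_subtype_val.comp (apexBump.continuous.comp continuous_height)
    · exact continuous_extend hf (hcont i)
  · rintro (_ | i) c
    · exact (apexBump _).2
    · induction c using ind with
      | incl x => exact hmem i x
      | mk a t => exact unitInterval.mul_mem (σ (apexBump t)).2 (hmem i (f a))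
  · induction c using ind with
    | incl x =>
      simpa [partitionOfUnity] using (hsum x).option (g := (partitionOfUnity f φ · (incl f x)))
    | mk a t =>
      have h : HasSum (fun i => partitionOfUnity f φ (some i) (mk f a t))
          (1 - (apexBump t : ℝ)) := by
        simpa [partitionOfUnity] using (hsum (f a)).mul_left (1 - (apexBump t : ℝ))
      simpa [partitionOfUnity] using h.option (g := (partitionOfUnity f φ · (mk f a t)))

theorem closure_support_partitionOfUnity_subset (hf : Continuous f) (φ : ι → X → ℝ)
    (o : Option ι) :
    closure (support (partitionOfUnity f φ o)) ⊆ cover f (fun i => closure (support (φ i))) o := by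
  refine closure_minimal ?_ (isClosed_cover hf (fun _ => isClosed_closure) o)
  cases o with
  | none => exact support_apexBump_height_subset
  | some i => exact (support_extend_subset _).trans (preimage_mono (image_mono subset_closure))

theorem isNumerableCover_cover (hf : Continuous f) {U : ι → Set X} (hU : IsNumerableCover U) :
    IsNumerableCover (cover f U) :=
  let ⟨φ, hφ, hlf, hsub⟩ := hU
  ⟨partitionOfUnity f φ, isPartitionOfUnity_partitionOfUnity hf hφ,
    (locallyFinite_cover hf hlf).subset (closure_support_partitionOfUnity_subset hf φ),
    fun o => (closure_support_partitionOfUnity_subset hf φ o).trans (cover_mono hsub o)⟩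

end UnreducedMappingCone

open UnreducedMappingCone in
/-- the unreduced mapping cone of a map into a Dold space is Dold. -/
theorem stmt11 {A X : Type u} [TopologicalSpace A] [TopologicalSpace X]
    (f : A → X) (hf : Continuous f) (hX : IsDoldSpace X) :
    IsDoldSpace (UnreducedMappingCone f) := by
  rcases isEmpty_or_nonempty (UnreducedMappingCone f) with _ | _
  · exact isDoldSpace_of_isEmpty
  obtain ⟨ι, U, hUcov, hUnum, hUcontr⟩ := hX
  exact ⟨Option ι, cover f U, exists_mem_cover hUcov, isNumerableCover_cover hf hUnum,
    ambientlyContractible_cover hf hUcontr⟩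
end

section
/- If X and Y are Dold spaces, then the product space X × Y is a Dold space. -/
open unitInterval

universe u v w

/-!
The products `U i ×ˢ V j` of the two covers cover `X × Y`. The products `f i x * g j y` of the
two partitions of unity form a partition of unity subordinate to them: the double series of
nonnegative terms sums to `1 * 1`, and the closed support of such a product is the product of
the closed supports, so local finiteness passes to the product. Finally, the product of two
contracting homotopies contracts `U i ×ˢ V j`.
-/

open Function Set

section Product

variable {ι κ X Y : Type*} [TopologicalSpace X] [TopologicalSpace Y]

theorem LocallyFinite.prod {s : ι → Set X} {t : κ → Set Y} (hs : LocallyFinite s)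
    (ht : LocallyFinite t) : LocallyFinite fun p : ι × κ => s p.1 ×ˢ t p.2 := by
  rintro ⟨x, y⟩
  obtain ⟨N, hN, hNs⟩ := hs x
  obtain ⟨M, hM, hMt⟩ := ht y
  refine ⟨N ×ˢ M, prod_mem_nhds hN hM, (hNs.prod hMt).subset ?_⟩
  rintro ⟨i, j⟩ ⟨⟨a, b⟩, ⟨ha, hb⟩, haN, hbM⟩
  exact ⟨⟨a, ha, haN⟩, ⟨b, hb, hbM⟩⟩

theorem tsupport_mul_comp_fst_snd {M₀ : Type*} [MulZeroClass M₀] [NoZeroDivisors M₀]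
    (f : X → M₀) (g : Y → M₀) :
    tsupport (fun q : X × Y => f q.1 * g q.2) = tsupport f ×ˢ tsupport g := by
  rw [tsupport, tsupport, tsupport, ← closure_prod_eq, support_mul]
  rfl

theorem IsPartitionOfUnity.prod {f : ι → X → ℝ} {g : κ → Y → ℝ} (hf : IsPartitionOfUnity f)
    (hg : IsPartitionOfUnity g) :
    IsPartitionOfUnity fun (p : ι × κ) (q : X × Y) => f p.1 q.1 * g p.2 q.2 := by
  obtain ⟨hf_cont, hf_mem, hf_sum⟩ := hf
  obtain ⟨hg_cont, hg_mem, hg_sum⟩ := hg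
  refine ⟨fun p => ((hf_cont p.1).comp continuous_fst).mul ((hg_cont p.2).comp continuous_snd),
    fun p q => ⟨mul_nonneg (hf_mem _ _).1 (hg_mem _ _).1,
      mul_le_one₀ (hf_mem _ _).2 (hg_mem _ _).1 (hg_mem _ _).2⟩, fun q => ?_⟩
  have h_summable : Summable fun p : ι × κ => f p.1 q.1 * g p.2 q.2 :=
    (hf_sum q.1).summable.mul_of_nonneg (hg_sum q.2).summable
      (fun i => (hf_mem i q.1).1) (fun j => (hg_mem j q.2).1)
  simpa only [mul_one] using (hf_sum q.1).mul (hg_sum q.2) h_summable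

theorem IsNumerableCover.prod {U : ι → Set X} {V : κ → Set Y} (hU : IsNumerableCover U)
    (hV : IsNumerableCover V) : IsNumerableCover fun p : ι × κ => U p.1 ×ˢ V p.2 := by
  obtain ⟨f, hf, hf_lf, hf_sub⟩ := hU
  obtain ⟨g, hg, hg_lf, hg_sub⟩ := hV
  refine ⟨fun p q => f p.1 q.1 * g p.2 q.2, hf.prod hg, ?_, fun p => ?_⟩
  · convert hf_lf.prod hg_lf using 2 with p
    exact tsupport_mul_comp_fst_snd (f p.1) (g p.2)
  · exact (tsupport_mul_comp_fst_snd (f p.1) (g p.2)).subset.trans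
      (prod_mono (hf_sub p.1) (hg_sub p.2))

theorem AmbientlyContractibleTo.prod {U : Set X} {V : Set Y} {x₀ : X} {y₀ : Y}
    (hU : AmbientlyContractibleTo U x₀) (hV : AmbientlyContractibleTo V y₀) :
    AmbientlyContractibleTo (U ×ˢ V) (x₀, y₀) := by
  obtain ⟨H⟩ := hU
  obtain ⟨G⟩ := hV
  -- the `prodMk`s at both ends are definitionally the inclusion and the constant map
  exact ⟨(H.compContinuousMap ⟨fun p : ↥(U ×ˢ V) => ⟨p.1.1, p.2.1⟩, by fun_prop⟩).prod
    (G.compContinuousMap ⟨fun p : ↥(U ×ˢ V) => ⟨p.1.2, p.2.2⟩, by fun_prop⟩)⟩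

theorem AmbientlyContractible.prod {U : Set X} {V : Set Y} (hU : AmbientlyContractible U)
    (hV : AmbientlyContractible V) : AmbientlyContractible (U ×ˢ V) :=
  let ⟨x₀, hx₀⟩ := hU
  let ⟨y₀, hy₀⟩ := hV
  ⟨(x₀, y₀), hx₀.prod hy₀⟩

end Product

/-- a product of two Dold spaces is a Dold space. -/
theorem stmt15 {X : Type u} {Y : Type v} [TopologicalSpace X] [TopologicalSpace Y]
    (hX : IsDoldSpace X) (hY : IsDoldSpace Y) :
    IsDoldSpace (X × Y) := by
  obtain ⟨ι, U, hU_cover, hU_num, hU_contr⟩ := hX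
  obtain ⟨κ, V, hV_cover, hV_num, hV_contr⟩ := hY
  refine ⟨ι × κ, fun p => U p.1 ×ˢ V p.2, fun q => ?_, hU_num.prod hV_num,
    fun p => (hU_contr p.1).prod (hV_contr p.2)⟩
  obtain ⟨i, hi⟩ := hU_cover q.1
  obtain ⟨j, hj⟩ := hV_cover q.2
  exact ⟨(i, j), hi, hj⟩
end
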